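/- arXiv:1804.07558 — 2 statements merged into one kernel-verified Lean document; each statement's English description precedes it below -/
import Mathlib

section
/- Let M be a finite free ℤ-module with a negative definite symmetric bilinear form ⟨·,·⟩ and a fixed basis e₁,…,e_r with ⟨e_i,e_j⟩ ≥ 0 for i ≠ j. If Z = Σ a_i e_i with all a_i ≥ 0, Z ≠ 0, and ⟨Z, e_i⟩ ≤ 0 for all i (Z is anti-nef), then a_i ≥ 1 for all i, i.e., Z ≥ Σ e_i. -/
/-!
If `Z ≥ 0` is anti-nef, its support is closed under adjacency: if `Z a > 0`, `Z b = 0` and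
`⟨e_b, e_a⟩ > 0`, then every term of `⟨Z, e_b⟩ = Σ_m ⟨e_b, e_m⟩ Z m` is nonnegative and the
`a`-term is positive. By connectedness the support of a nonzero `Z` is everything, and positive
integers are `≥ 1`.
-/

open Matrix Finset

namespace Matrix

variable {ι R : Type*} [Fintype ι]

theorem mulVec_apply_pos_of_adj [Semiring R] [PartialOrder R] [IsStrictOrderedRing R]
    {B : Matrix ι ι R} (hoff : ∀ i j, i ≠ j → 0 ≤ B i j) {Z : ι → R} (hZ : 0 ≤ Z)
    {a b : ι} (ha : 0 < Z a) (hb : Z b = 0) (hba : 0 < B b a) :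
    0 < (B *ᵥ Z) b := by
  have hterm_nonneg : ∀ m, 0 ≤ B b m * Z m := fun m => by
    rcases eq_or_ne m b with rfl | hmb
    · simp [hb]
    · exact mul_nonneg (hoff b m hmb.symm) (hZ m)
  exact sum_pos' (fun m _ => hterm_nonneg m) ⟨a, mem_univ a, mul_pos hba ha⟩

theorem pos_of_antinef_of_connected [Semiring R] [LinearOrder R] [IsStrictOrderedRing R]
    {B : Matrix ι ι R} (hsymm : B.IsSymm) (hoff : ∀ i j, i ≠ j → 0 ≤ B i j)
    (hconn : ∀ S : Finset ι, S.Nonempty → S ≠ univ → ∃ i ∈ S, ∃ j, j ∉ S ∧ 0 < B i j)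
    {Z : ι → R} (hZ : 0 ≤ Z) (hZne : Z ≠ 0) (hanef : ∀ i, (B *ᵥ Z) i ≤ 0) (i : ι) :
    0 < Z i := by
  classical
  set S : Finset ι := {k | 0 < Z k}
  have hS : S.Nonempty := by
    obtain ⟨k, hk⟩ := Function.ne_iff.mp hZne
    exact ⟨k, mem_filter.mpr ⟨mem_univ k, (hZ k).lt_of_ne' hk⟩⟩
  by_contra hi
  have hSne : S ≠ univ := fun h => hi (mem_filter.mp (eq_univ_iff_forall.mp h i)).2
  obtain ⟨a, ha, b, hb, hab⟩ := hconn S hS hSne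
  have hZb : Z b = 0 :=
    le_antisymm (not_lt.mp fun h => hb (mem_filter.mpr ⟨mem_univ b, h⟩)) (hZ b)
  exact (hanef b).not_gt <|
    mulVec_apply_pos_of_adj hoff hZ (mem_filter.mp ha).2 hZb (hsymm.apply a b ▸ hab)

end Matrix

theorem nonzero_antinef_dominates_reduced_cycle_general
    (r : ℕ) (B : Matrix (Fin r) (Fin r) ℤ)
    (hsymm : B.IsSymm)
    (hoff : ∀ i j, i ≠ j → 0 ≤ B i j)
    (hconn : ∀ S : Finset (Fin r), S.Nonempty → S ≠ Finset.univ →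
      ∃ i ∈ S, ∃ j, j ∉ S ∧ 0 < B i j)
    (Z : Fin r → ℤ) (hZnn : 0 ≤ Z) (hZne : Z ≠ 0)
    (hanef : ∀ i, B.mulVec Z i ≤ 0) :
    ∀ i, 1 ≤ Z i :=
  fun i => Order.one_le_iff_pos.mpr <|
    Matrix.pos_of_antinef_of_connected hsymm hoff hconn hZnn hZne hanef i

/-- Let `M` be a finite free `ℤ`-module with a negative definite
symmetric bilinear form (given by the matrix `B` in the fixed basis `e₁, …, e_r`),
with `⟨eᵢ, eⱼ⟩ ≥ 0` for `i ≠ j` and connected dual graph.  If `Z = Σ aᵢeᵢ` has all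
`aᵢ ≥ 0`, `Z ≠ 0` and `⟨Z, eᵢ⟩ ≤ 0` for all `i` (i.e. `Z` is anti-nef), then
`aᵢ ≥ 1` for all `i`, i.e. `Z ≥ Σ eᵢ`. -/
theorem nonzero_antinef_dominates_reduced_cycle
    (r : ℕ) (B : Matrix (Fin r) (Fin r) ℤ)
    (hsymm : B.IsSymm)
    (hneg : ∀ v : Fin r → ℤ, v ≠ 0 → v ⬝ᵥ B.mulVec v < 0)
    (hoff : ∀ i j, i ≠ j → 0 ≤ B i j)
    (hconn : ∀ S : Finset (Fin r), S.Nonempty → S ≠ Finset.univ →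
      ∃ i ∈ S, ∃ j, j ∉ S ∧ 0 < B i j)
    (Z : Fin r → ℤ) (hZnn : 0 ≤ Z) (hZne : Z ≠ 0)
    (hanef : ∀ i, B.mulVec Z i ≤ 0) :
    ∀ i, 1 ≤ Z i :=
  nonzero_antinef_dominates_reduced_cycle_general r B hsymm hoff hconn Z hZnn hZne hanef
end

section
/- Let M be a finite free ℤ-module with negative definite symmetric bilinear form and basis e₁,…,e_r with nonnegative off-diagonal pairings and connected dual graph. Then there exists a unique minimal nonzero effective cycle Z_E (the fundamental cycle) satisfying ⟨Z_E, e_i⟩ ≤ 0 for all i; that is, the set of nonzero anti-nef effective cycles has a unique minimal element. -/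
open Matrix Finset

/-- comparison lemma: lowering coordinates other than `i` keeps anti-nefness at `i`. -/
lemma anef_key {r : ℕ} (B : Matrix (Fin r) (Fin r) ℤ)
    (hoff : ∀ i j, i ≠ j → 0 ≤ B i j)
    (Z U : Fin r → ℤ) (i : Fin r) (hle : ∀ j, U j ≤ Z j) (heq : U i = Z i)
    (hZ : B.mulVec Z i ≤ 0) : B.mulVec U i ≤ 0 := by
  have h : B.mulVec U i ≤ B.mulVec Z i := by
    simp only [Matrix.mulVec, dotProduct]
    apply Finset.sum_le_sum
    intro j _
    rcases eq_or_ne j i with rfl | hj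
    · rw [heq]
    · exact mul_le_mul_of_nonneg_left (hle j) (hoff i j (Ne.symm hj))
  linarith

/-- every nonzero effective anti-nef cycle is strictly positive. -/
lemma anef_pos {r : ℕ} (B : Matrix (Fin r) (Fin r) ℤ)
    (hsymm : B.IsSymm)
    (hoff : ∀ i j, i ≠ j → 0 ≤ B i j)
    (hconn : ∀ S : Finset (Fin r), S.Nonempty → S ≠ Finset.univ →
      ∃ i ∈ S, ∃ j, j ∉ S ∧ 0 < B i j)
    (Z : Fin r → ℤ) (hZ0 : 0 ≤ Z) (hZne : Z ≠ 0)
    (ha : ∀ i, B.mulVec Z i ≤ 0) : ∀ i, 0 < Z i := by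
  classical
  by_contra h
  push_neg at h
  obtain ⟨i₀, hi₀⟩ := h
  set S : Finset (Fin r) := Finset.univ.filter fun i => 0 < Z i with hS
  have hSne : S.Nonempty := by
    obtain ⟨k, hk⟩ := Function.ne_iff.mp hZne
    have hk' : Z k ≠ 0 := by simpa using hk
    refine ⟨k, ?_⟩
    rw [hS, Finset.mem_filter]
    exact ⟨Finset.mem_univ k, lt_of_le_of_ne (hZ0 k) (Ne.symm hk')⟩
  have hSuniv : S ≠ Finset.univ := by
    intro hu
    have : i₀ ∈ S := hu ▸ Finset.mem_univ i₀
    rw [hS, Finset.mem_filter] at this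
    exact absurd this.2 (not_lt.mpr hi₀)
  obtain ⟨i, hiS, j, hjS, hij⟩ := hconn S hSne hSuniv
  have hZi : 0 < Z i := by
    rw [hS, Finset.mem_filter] at hiS; exact hiS.2
  have hZj : Z j = 0 := by
    have : ¬ 0 < Z j := by
      intro hlt; exact hjS (by simp [hS, hlt])
    exact le_antisymm (not_lt.mp this) (hZ0 j)
  have hij' : i ≠ j := by rintro rfl; exact hjS hiS
  have hpos : 0 < B.mulVec Z j := by
    simp only [Matrix.mulVec, dotProduct]
    apply Finset.sum_pos'
    · intro k _
      rcases eq_or_ne k j with rfl | hk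
      · simp [hZj]
      · exact mul_nonneg (hoff j k (Ne.symm hk)) (hZ0 k)
    · refine ⟨i, Finset.mem_univ i, ?_⟩
      have : B j i = B i j := hsymm.apply i j
      rw [this]
      exact mul_pos hij hZi
  exact absurd (ha j) (not_le.mpr hpos)

/-- existence of a nonzero effective anti-nef cycle. -/
lemma anef_exists {r : ℕ} (B : Matrix (Fin r) (Fin r) ℤ)
    (hneg : ∀ v : Fin r → ℤ, v ≠ 0 → v ⬝ᵥ B.mulVec v < 0)
    (hoff : ∀ i j, i ≠ j → 0 ≤ B i j)
    (hr : 0 < r) :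
    ∃ Z : Fin r → ℤ, 0 ≤ Z ∧ Z ≠ 0 ∧ ∀ i, B.mulVec Z i ≤ 0 := by
  classical
  have hd : B.det ≠ 0 := by
    intro h0
    obtain ⟨v, hv, hBv⟩ := (Matrix.exists_mulVec_eq_zero_iff).mpr h0
    have := hneg v hv
    rw [hBv] at this
    simp at this
  set d : ℤ := B.det with hdd
  set y : Fin r → ℤ := (B.adjugate).mulVec (fun _ => -d) with hy
  have hBy : ∀ i, B.mulVec y i = -(d * d) := by
    intro i
    have : B.mulVec y = d • (fun _ => -d : Fin r → ℤ) := by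
      rw [hy, Matrix.mulVec_mulVec, Matrix.mul_adjugate, Matrix.smul_mulVec,
        Matrix.one_mulVec]
    rw [this]
    simp only [Pi.smul_apply, smul_eq_mul]
    ring
  set p : Fin r → ℤ := fun i => max (y i) 0 with hp
  set n : Fin r → ℤ := fun i => max (-(y i)) 0 with hn
  have hpn : ∀ i, p i - n i = y i := by
    intro i
    rcases le_total (y i) 0 with h | h
    · rw [show p i = 0 from max_eq_right h,
        show n i = -(y i) from max_eq_left (by linarith)]
      ring
    · rw [show p i = y i from max_eq_left h,
        show n i = 0 from max_eq_right (by linarith)]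
      ring
  have hp0 : ∀ i, 0 ≤ p i := fun i => le_max_right _ _
  have hn0 : ∀ i, 0 ≤ n i := fun i => le_max_right _ _
  have hpy : p - y = n := funext fun i => by
    show p i - y i = n i
    linarith [hpn i]
  have hmul : B.mulVec n = B.mulVec p - B.mulVec y := by
    rw [← hpy, Matrix.mulVec_sub]
  have h1 : n ⬝ᵥ B.mulVec y ≤ 0 := by
    simp only [dotProduct]
    apply Finset.sum_nonpos
    intro i _
    rw [hBy i]
    have := hn0 i
    nlinarith
  have h2 : 0 ≤ n ⬝ᵥ B.mulVec p := by
    simp only [dotProduct]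
    apply Finset.sum_nonneg
    intro i _
    rcases le_or_gt 0 (y i) with h | h
    · have : n i = 0 := by simp [hn, max_eq_right (by linarith : -(y i) ≤ 0)]
      simp [this]
    · have hpi : p i = 0 := by simp [hp, max_eq_right (le_of_lt h)]
      apply mul_nonneg (hn0 i)
      simp only [Matrix.mulVec, dotProduct]
      apply Finset.sum_nonneg
      intro j _
      rcases eq_or_ne j i with rfl | hj
      · simp [hpi]
      · exact mul_nonneg (hoff i j (Ne.symm hj)) (hp0 j)
  have hnn : 0 ≤ n ⬝ᵥ B.mulVec n := by
    rw [hmul, dotProduct_sub]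
    linarith
  have hn_zero : n = 0 := by
    by_contra hne
    exact absurd hnn (not_le.mpr (hneg n hne))
  have hy0 : 0 ≤ y := by
    intro i
    have := hpn i
    have := hn0 i
    have hni : n i = 0 := by rw [hn_zero]; rfl
    have := hp0 i
    simp only [Pi.zero_apply]
    linarith [hpn i, hp0 i]
  have hyne : y ≠ 0 := by
    intro h0
    have := hBy ⟨0, hr⟩
    rw [h0, Matrix.mulVec_zero] at this
    simp at this
    exact hd this
  exact ⟨y, hy0, hyne, fun i => by rw [hBy i]; nlinarith [sq_nonneg d]⟩

/-- Let `M` be a finite free `ℤ`-module with negative definite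
symmetric bilinear form `B` and basis `e₁, …, e_r` with nonnegative off-diagonal
pairings and connected dual graph.  Then the set of nonzero effective anti-nef
cycles has a unique minimal element `Z_E` (the fundamental cycle): there is a
unique `Z_E` which is nonzero, effective, anti-nef and satisfies `Z_E ≤ W` for
every nonzero effective anti-nef cycle `W`. -/
theorem fundamental_cycle_exists_unique
    (r : ℕ) (B : Matrix (Fin r) (Fin r) ℤ)
    (hsymm : B.IsSymm)
    (hneg : ∀ v : Fin r → ℤ, v ≠ 0 → v ⬝ᵥ B.mulVec v < 0)
    (hoff : ∀ i j, i ≠ j → 0 ≤ B i j)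
    (hconn : ∀ S : Finset (Fin r), S.Nonempty → S ≠ Finset.univ →
      ∃ i ∈ S, ∃ j, j ∉ S ∧ 0 < B i j)
    (hr : 0 < r) :
    ∃! ZE : Fin r → ℤ,
      (0 ≤ ZE ∧ ZE ≠ 0 ∧ ∀ i, B.mulVec ZE i ≤ 0) ∧
        ∀ W : Fin r → ℤ, 0 ≤ W → W ≠ 0 → (∀ i, B.mulVec W i ≤ 0) → ZE ≤ W := by
  classical
  obtain ⟨y, hy0, hyne, hya⟩ := anef_exists B hneg hoff hr
  set P : ℕ → Prop := fun m => ∃ Z : Fin r → ℤ,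
    (0 ≤ Z ∧ Z ≠ 0 ∧ ∀ i, B.mulVec Z i ≤ 0) ∧ (∑ i, Z i) = (m : ℤ) with hP
  have hPex : ∃ m, P m := by
    refine ⟨(∑ i, y i).toNat, y, ⟨hy0, hyne, hya⟩, ?_⟩
    rw [Int.toNat_of_nonneg (Finset.sum_nonneg fun i _ => hy0 i)]
  obtain ⟨Z₀, ⟨hZ₀0, hZ₀ne, hZ₀a⟩, hZ₀sum⟩ := Nat.find_spec hPex
  have hmin : ∀ W : Fin r → ℤ, 0 ≤ W → W ≠ 0 → (∀ i, B.mulVec W i ≤ 0) → Z₀ ≤ W := by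
    intro W hW0 hWne hWa
    set U : Fin r → ℤ := fun i => min (Z₀ i) (W i) with hU
    have hU0 : 0 ≤ U := fun i => le_min (hZ₀0 i) (hW0 i)
    have hUZ : ∀ j, U j ≤ Z₀ j := fun j => min_le_left _ _
    have hUW : ∀ j, U j ≤ W j := fun j => min_le_right _ _
    have hUne : U ≠ 0 := by
      intro h0
      have hp := anef_pos B hsymm hoff hconn Z₀ hZ₀0 hZ₀ne hZ₀a ⟨0, hr⟩
      have hq := anef_pos B hsymm hoff hconn W hW0 hWne hWa ⟨0, hr⟩
      have : U ⟨0, hr⟩ = 0 := by rw [h0]; rfl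
      rw [hU] at this
      simp only [lt_min_iff] at *
      omega
    have hUa : ∀ i, B.mulVec U i ≤ 0 := by
      intro i
      rcases le_total (Z₀ i) (W i) with h | h
      · exact anef_key B hoff Z₀ U i hUZ (min_eq_left h) (hZ₀a i)
      · exact anef_key B hoff W U i hUW (min_eq_right h) (hWa i)
    have hUsum : (∑ i, U i) = ((∑ i, U i).toNat : ℤ) :=
      (Int.toNat_of_nonneg (Finset.sum_nonneg fun i _ => hU0 i)).symm
    have hle : Nat.find hPex ≤ (∑ i, U i).toNat :=
      Nat.find_le ⟨U, ⟨hU0, hUne, hUa⟩, hUsum⟩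
    have hsums : (∑ i, Z₀ i) ≤ (∑ i, U i) := by
      rw [hZ₀sum, hUsum]
      exact_mod_cast hle
    have heq : ∀ k, U k = Z₀ k := by
      by_contra hne
      push_neg at hne
      obtain ⟨k, hk⟩ := hne
      have hlt : (∑ i, U i) < (∑ i, Z₀ i) :=
        Finset.sum_lt_sum (fun i _ => hUZ i)
          ⟨k, Finset.mem_univ k, lt_of_le_of_ne (hUZ k) hk⟩
      omega
    intro k
    calc Z₀ k = U k := (heq k).symm
    _ ≤ W k := hUW k
  refine ⟨Z₀, ⟨⟨hZ₀0, hZ₀ne, hZ₀a⟩, hmin⟩, ?_⟩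
  rintro Y ⟨⟨hY0, hYne, hYa⟩, hYmin⟩
  exact le_antisymm (hYmin Z₀ hZ₀0 hZ₀ne hZ₀a) (hmin Y hY0 hYne hYa)
end
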